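/- arXiv:0803.0473 — 7 statements merged into one kernel-verified Lean document; each statement's English description precedes it below -/
import Mathlib

section
/- Let n items have unbiased weight estimators ŵ_i of weights w_i. Define ΣV = Σ_i Var[ŵ_i] and VΣ = Var[Σ_i ŵ_i]. Then the average variance over subsets of size m satisfies V_m = (m/n)·((n-m)/(n-1)·ΣV + (m-1)/(n-1)·VΣ), where V_m is the average of Var[Σ_{i∈I} ŵ_i] over all subsets I ⊆ [n] with |I| = m, assuming n ≥ 2. -/
/-!
Expanding `Var[∑ i ∈ I, ŵ i] = ∑ i ∈ I, ∑ j ∈ I, Cov[ŵ i, ŵ j]` and summing over all `m`-subsets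
`I`, each pair `(i, j)` is counted once per `m`-subset containing `{i, j}`. Double counting
gives `#{I | t ⊆ I} * C(n, #t) = C(n, m) * C(m, #t)`, so on average a diagonal term has weight
`m / n` and an off-diagonal one `m (m - 1) / (n (n - 1))`. The diagonal part is `ΣV` and the
off-diagonal part is `VΣ - ΣV`.
-/

open MeasureTheory ProbabilityTheory Finset

namespace Finset

variable {α : Type*} [DecidableEq α]

theorem card_filter_powersetCard_subset_mul_choose {s t : Finset α} (n : ℕ) (hst : s ⊆ t) :
    #{I ∈ t.powersetCard n | s ⊆ I} * (#t).choose #s = (#t).choose n * n.choose #s := by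
  rcases le_or_gt #s n with hsn | hns
  · rw [card_filter_powersetCard_subset s t n hst hsn, Nat.choose_mul hsn, mul_comm]
  · have hempty : {I ∈ t.powersetCard n | s ⊆ I} = ∅ :=
      filter_eq_empty_iff.2 fun I hI hsI =>
        (card_le_card hsI).not_gt ((mem_powersetCard.1 hI).2 ▸ hns)
    rw [hempty, Nat.choose_eq_zero_of_lt hns, card_empty, zero_mul, mul_zero]

theorem cast_card_filter_powersetCard_subset {K : Type*} [Field K] [CharZero K]
    {s t : Finset α} (n : ℕ) (hst : s ⊆ t) :
    (#{I ∈ t.powersetCard n | s ⊆ I} : K) = (#t).choose n * n.choose #s / (#t).choose #s := by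
  have hchoose : ((#t).choose #s : K) ≠ 0 :=
    Nat.cast_ne_zero.2 (Nat.choose_pos (card_le_card hst)).ne'
  rw [eq_div_iff hchoose]
  exact_mod_cast card_filter_powersetCard_subset_mul_choose n hst

theorem sum_powersetCard_sum_sum_eq_sum_card_smul {M : Type*} [AddCommMonoid M]
    (s : Finset α) (m : ℕ) (f : α → α → M) :
    ∑ I ∈ s.powersetCard m, ∑ i ∈ I, ∑ j ∈ I, f i j
      = ∑ i ∈ s, ∑ j ∈ s, #{I ∈ s.powersetCard m | {i, j} ⊆ I} • f i j := by
  simp_rw [← sum_product']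
  rw [sum_comm' (t' := s ×ˢ s) (s' := fun p => {I ∈ s.powersetCard m | {p.1, p.2} ⊆ I})]
  · simp only [sum_const]
  · intro I p
    simp only [mem_product, mem_filter, mem_powersetCard, insert_subset_iff,
      singleton_subset_iff]
    constructor
    · rintro ⟨⟨hIs, hI⟩, h1, h2⟩
      exact ⟨⟨⟨hIs, hI⟩, h1, h2⟩, hIs h1, hIs h2⟩
    · rintro ⟨⟨⟨hIs, hI⟩, h1, h2⟩, -⟩
      exact ⟨⟨hIs, hI⟩, h1, h2⟩

theorem sum_powersetCard_sum_sum_eq_choose_mul {K : Type*} [Field K] [CharZero K]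
    (s : Finset α) (m : ℕ) (f : α → α → K) :
    ∑ I ∈ s.powersetCard m, ∑ i ∈ I, ∑ j ∈ I, f i j
      = (#s).choose m * (m / #s * ∑ i ∈ s, f i i
          + m * (m - 1) / (#s * (#s - 1)) * ∑ i ∈ s, ∑ j ∈ s.erase i, f i j) := by
  simp only [sum_powersetCard_sum_sum_eq_sum_card_smul, mul_add, mul_sum, ← sum_add_distrib]
  refine sum_congr rfl fun i hi => ?_
  rw [← add_sum_erase s _ hi]
  congr 1
  · rw [pair_eq_singleton, nsmul_eq_mul,
      cast_card_filter_powersetCard_subset m (singleton_subset_iff.2 hi)]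
    simp only [card_singleton, Nat.choose_one_right]
    ring
  · refine sum_congr rfl fun j hj => ?_
    have hij : {i, j} ⊆ s := insert_subset hi (singleton_subset_iff.2 (mem_of_mem_erase hj))
    rw [nsmul_eq_mul, cast_card_filter_powersetCard_subset m hij,
      card_pair (ne_of_mem_erase hj).symm, Nat.cast_choose_two, Nat.cast_choose_two,
      mul_div_assoc, div_div_div_cancel_right₀ two_ne_zero]
    ring

end Finset

theorem avg_variance_subsets_general
    {Ω : Type*} [MeasureSpace Ω] [IsProbabilityMeasure (ℙ : Measure Ω)]
    (n : ℕ) (hn : 2 ≤ n) (what : Fin n → Ω → ℝ)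
    (hL2 : ∀ i, MemLp (what i) 2 ℙ)
    (m : ℕ) (hm : m ≤ n)
    (SV VS Vm : ℝ)
    (hSV : SV = ∑ i, variance (what i) ℙ)
    (hVS : VS = variance (fun ω => ∑ i, what i ω) ℙ)
    (hVm : Vm = (∑ I ∈ Finset.powersetCard m (Finset.univ : Finset (Fin n)),
        variance (fun ω => ∑ i ∈ I, what i ω) ℙ) / (n.choose m : ℝ)) :
    Vm = ((m : ℝ) / n) * (((n : ℝ) - m) / ((n : ℝ) - 1) * SV
      + ((m : ℝ) - 1) / ((n : ℝ) - 1) * VS) := by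
  have hSV_cov : SV = ∑ i, cov[what i, what i] := by
    simp only [hSV, covariance_self (hL2 _).aemeasurable]
  have hVS_cov : VS = SV + ∑ i, ∑ j ∈ univ.erase i, cov[what i, what j] := by
    rw [hVS, variance_fun_sum hL2, hSV_cov, ← sum_add_distrib]
    exact sum_congr rfl fun i _ => (add_sum_erase _ _ (mem_univ i)).symm
  have hsum : ∑ I ∈ powersetCard m univ, variance (fun ω => ∑ i ∈ I, what i ω) ℙ
      = n.choose m * (m / n * SV + m * (m - 1) / (n * (n - 1)) * (VS - SV)) := by
    simp only [variance_fun_sum' fun i _ => hL2 i, sum_powersetCard_sum_sum_eq_choose_mul,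
      card_univ, Fintype.card_fin, hSV_cov, hVS_cov, add_sub_cancel_left]
  have hchoose : (n.choose m : ℝ) ≠ 0 := Nat.cast_ne_zero.2 (Nat.choose_pos hm).ne'
  have hn1 : (n : ℝ) - 1 ≠ 0 := by
    have : (2 : ℝ) ≤ n := by exact_mod_cast hn
    linarith
  have hn0 : (n : ℝ) ≠ 0 := by positivity
  rw [hVm, hsum, mul_div_cancel_left₀ _ hchoose]
  field_simp
  ring

theorem avg_variance_subsets
    {Ω : Type*} [MeasureSpace Ω] [IsProbabilityMeasure (ℙ : Measure Ω)]
    (n : ℕ) (hn : 2 ≤ n) (w : Fin n → ℝ) (what : Fin n → Ω → ℝ)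
    (hL2 : ∀ i, MemLp (what i) 2 ℙ)
    (hunb : ∀ i, ∫ ω, what i ω ∂ℙ = w i)
    (m : ℕ) (hm : m ≤ n)
    (SV VS Vm : ℝ)
    (hSV : SV = ∑ i, variance (what i) ℙ)
    (hVS : VS = variance (fun ω => ∑ i, what i ω) ℙ)
    (hVm : Vm = (∑ I ∈ Finset.powersetCard m (Finset.univ : Finset (Fin n)),
        variance (fun ω => ∑ i ∈ I, what i ω) ℙ) / (n.choose m : ℝ)) :
    Vm = ((m : ℝ) / n) * (((n : ℝ) - m) / ((n : ℝ) - 1) * SV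
      + ((m : ℝ) - 1) / ((n : ℝ) - 1) * VS) :=
  avg_variance_subsets_general n hn what hL2 m hm SV VS Vm hSV hVS hVm
end

section
/- For positive weights w_1,...,w_n and integer k with 1 ≤ k < n, there exists a unique τ > 0 such that Σ_{i=1}^n min{1, w_i/τ} = k. -/
/-!
Each summand `min 1 (w i / τ)` is continuous and non-increasing in `τ > 0`, so the sum is too; it
equals `n` once `τ ≤ min w` and is at most `(∑ w) / τ`, which is `≤ 1` at `τ = ∑ w`, so the
intermediate value theorem produces a solution. As long as the sum is below `n`, some summand is
`w i / τ < 1` and strictly decreasing, so the sum is strictly decreasing there and the solution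
is unique.
-/

open Finset

noncomputable def ippsSum {ι : Type*} [Fintype ι] (w : ι → ℝ) (τ : ℝ) : ℝ :=
  ∑ i, min 1 (w i / τ)

section

variable {ι : Type*} [Fintype ι] {w : ι → ℝ}

lemma continuousOn_ippsSum : ContinuousOn (ippsSum w) (Set.Ioi 0) :=
  continuousOn_finsetSum _ fun _ _ =>
    continuousOn_const.inf (continuousOn_const.div continuousOn_id fun _ hτ => ne_of_gt hτ)

lemma ippsSum_eq_card {τ : ℝ} (hτ : 0 < τ) (h : ∀ i, τ ≤ w i) :
    ippsSum w τ = Fintype.card ι := by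
  simp [ippsSum, fun i => min_eq_left ((one_le_div hτ).2 (h i))]

lemma ippsSum_le_sum_div (τ : ℝ) : ippsSum w τ ≤ (∑ i, w i) / τ := by
  rw [sum_div]
  exact sum_le_sum fun i _ => min_le_right _ _

lemma exists_div_lt_one_of_ippsSum_lt_card {τ : ℝ} (h : ippsSum w τ < Fintype.card ι) :
    ∃ i, w i / τ < 1 := by
  by_contra! hge
  simp [ippsSum, fun i => min_eq_left (hge i)] at h

lemma ippsSum_lt_of_lt (hw : ∀ i, 0 < w i) {τ τ' : ℝ} (hτ : 0 < τ) (hττ' : τ < τ')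
    (h : ippsSum w τ < Fintype.card ι) : ippsSum w τ' < ippsSum w τ := by
  obtain ⟨i₀, hi₀⟩ := exists_div_lt_one_of_ippsSum_lt_card h
  refine sum_lt_sum (fun i _ => min_le_min le_rfl ?_) ⟨i₀, mem_univ _, ?_⟩
  · exact div_le_div_of_nonneg_left (hw i).le hτ hττ'.le
  · calc min 1 (w i₀ / τ') ≤ w i₀ / τ' := min_le_right _ _
      _ < w i₀ / τ := div_lt_div_of_pos_left (hw i₀) hτ hττ'
      _ = min 1 (w i₀ / τ) := (min_eq_right hi₀.le).symm

lemma ippsSum_injOn (hw : ∀ i, 0 < w i) :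
    Set.InjOn (ippsSum w) {τ | 0 < τ ∧ ippsSum w τ < Fintype.card ι} := by
  rintro τ ⟨hτ, hτn⟩ τ' ⟨hτ', hτ'n⟩ heq
  by_contra hne
  rcases lt_or_gt_of_ne hne with hlt | hlt
  · exact (ippsSum_lt_of_lt hw hτ hlt hτn).ne heq.symm
  · exact (ippsSum_lt_of_lt hw hτ' hlt hτ'n).ne heq

lemma exists_ippsSum_eq (hw : ∀ i, 0 < w i) {c : ℝ} (hc₁ : 1 ≤ c)
    (hcn : c ≤ Fintype.card ι) : ∃ τ, 0 < τ ∧ ippsSum w τ = c := by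
  have : Nonempty ι :=
    Fintype.card_pos_iff.mp (by exact_mod_cast one_pos.trans_le (hc₁.trans hcn))
  obtain ⟨i₀, hi₀⟩ := Finite.exists_min w
  have hsum : w i₀ ≤ ∑ i, w i := single_le_sum (fun i _ => (hw i).le) (mem_univ i₀)
  have hlow : ippsSum w (∑ i, w i) ≤ 1 :=
    (ippsSum_le_sum_div _).trans_eq (div_self ((hw i₀).trans_le hsum).ne')
  have hhigh : ippsSum w (w i₀) = Fintype.card ι := ippsSum_eq_card (hw i₀) hi₀
  obtain ⟨τ, hτ, hτc⟩ := intermediate_value_Icc' hsum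
    (continuousOn_ippsSum.mono fun _ hτ => (hw i₀).trans_le hτ.1)
    ⟨hlow.trans hc₁, hhigh ▸ hcn⟩
  exact ⟨τ, (hw i₀).trans_le hτ.1, hτc⟩

end

theorem ipps_threshold_exists_unique
    (n k : ℕ) (hk : 1 ≤ k) (hkn : k < n) (w : Fin n → ℝ) (hw : ∀ i, 0 < w i) :
    ∃! τ : ℝ, 0 < τ ∧ ∑ i, min 1 (w i / τ) = (k : ℝ) := by
  have hkn' : (k : ℝ) < Fintype.card (Fin n) := by simpa using hkn
  obtain ⟨τ, hτ, hτk⟩ := exists_ippsSum_eq hw (by exact_mod_cast hk) hkn'.le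
  refine ⟨τ, ⟨hτ, hτk⟩, fun σ ⟨hσ, hσk⟩ => ?_⟩
  exact ippsSum_injOn hw ⟨hσ, hσk.trans_lt hkn'⟩ ⟨hτ, hτk.trans_lt hkn'⟩ (hσk.trans hτk.symm)
end

section
/- In the VarOpt_{k,k+1} scheme dropping exactly one of n = k+1 items, with item i dropped with probability q_i = 1 − p_i where Σ_i p_i = k, the inclusion events satisfy property (iii+)(I): for any subset J of items, Pr[all items of J are in the sample] ≤ Π_{i∈J} p_i. -/
open MeasureTheory ProbabilityTheory Finset

/-! The events `{d = j}` are disjoint, so the probability of avoiding all of `J` is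
`1 - ∑_{j ∈ J} q j`, which is at most `∏_{j ∈ J} (1 - q j)` by the Weierstrass product
inequality. -/

theorem Finset.one_sub_sum_le_prod_one_sub {ι R : Type*} [CommRing R] [PartialOrder R]
    [IsOrderedRing R] (s : Finset ι) (f : ι → R) (h0 : ∀ i ∈ s, 0 ≤ f i)
    (h1 : ∀ i ∈ s, f i ≤ 1) :
    1 - ∑ i ∈ s, f i ≤ ∏ i ∈ s, (1 - f i) := by
  classical
  induction s using Finset.induction_on with
  | empty => simp
  | insert a s ha ih =>
    rw [sum_insert ha, prod_insert ha]
    have hfa0 : 0 ≤ f a := h0 a (mem_insert_self a s)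
    have hfa1 : 0 ≤ 1 - f a := sub_nonneg.2 (h1 a (mem_insert_self a s))
    have hsum : 0 ≤ ∑ i ∈ s, f i := sum_nonneg fun i hi ↦ h0 i (mem_insert_of_mem hi)
    have hprod : 1 - ∑ i ∈ s, f i ≤ ∏ i ∈ s, (1 - f i) :=
      ih (fun i hi ↦ h0 i (mem_insert_of_mem hi)) fun i hi ↦ h1 i (mem_insert_of_mem hi)
    calc 1 - (f a + ∑ i ∈ s, f i)
        ≤ 1 - (f a + ∑ i ∈ s, f i) + f a * ∑ i ∈ s, f i :=
          le_add_of_nonneg_right (mul_nonneg hfa0 hsum)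
      _ = (1 - f a) * (1 - ∑ i ∈ s, f i) := by ring
      _ ≤ (1 - f a) * ∏ i ∈ s, (1 - f i) := mul_le_mul_of_nonneg_left hprod hfa1

section

variable {Ω β : Type*} [MeasurableSpace Ω] [MeasurableSpace β] [MeasurableSingletonClass β]
  {μ : Measure Ω} [IsProbabilityMeasure μ] {d : Ω → β}

theorem probReal_forall_ne_eq_one_sub_sum (hd : Measurable d) (J : Finset β) :
    μ.real {ω | ∀ j ∈ J, d ω ≠ j} = 1 - ∑ j ∈ J, μ.real (d ⁻¹' {j}) := by
  have hcompl : {ω | ∀ j ∈ J, d ω ≠ j} = (d ⁻¹' J)ᶜ := by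
    ext ω
    simp
  rw [hcompl, probReal_compl_eq_one_sub (hd J.measurableSet),
    sum_measureReal_preimage_singleton J fun j _ ↦ hd (measurableSet_singleton j)]

theorem probReal_forall_ne_le_prod_one_sub (hd : Measurable d) (J : Finset β) :
    μ.real {ω | ∀ j ∈ J, d ω ≠ j} ≤ ∏ j ∈ J, (1 - μ.real (d ⁻¹' {j})) := by
  rw [probReal_forall_ne_eq_one_sub_sum hd]
  exact J.one_sub_sum_le_prod_one_sub _ (fun _ _ ↦ measureReal_nonneg)
    fun _ _ ↦ measureReal_le_one

end

theorem varopt_drop_one_inclusion_bound_general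
    {Ω : Type*} [MeasureSpace Ω] [IsProbabilityMeasure (ℙ : Measure Ω)]
    (n : ℕ) (q : Fin n → ℝ)
    (d : Ω → Fin n) (hd : Measurable d)
    (hdist : ∀ i, (ℙ {ω | d ω = i}).toReal = q i)
    (J : Finset (Fin n)) :
    (ℙ {ω | ∀ j ∈ J, d ω ≠ j}).toReal ≤ ∏ j ∈ J, (1 - q j) := by
  simp only [← hdist]
  exact probReal_forall_ne_le_prod_one_sub hd J

theorem varopt_drop_one_inclusion_bound
    {Ω : Type*} [MeasureSpace Ω] [IsProbabilityMeasure (ℙ : Measure Ω)]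
    (n : ℕ) (q : Fin n → ℝ) (hq0 : ∀ i, 0 ≤ q i) (hq1 : ∀ i, q i ≤ 1)
    (hqsum : ∑ i, q i = 1)
    (d : Ω → Fin n) (hd : Measurable d)
    (hdist : ∀ i, (ℙ {ω | d ω = i}).toReal = q i)
    (J : Finset (Fin n)) :
    (ℙ {ω | ∀ j ∈ J, d ω ≠ j}).toReal ≤ ∏ j ∈ J, (1 - q j) :=
  varopt_drop_one_inclusion_bound_general n q d hd hdist J
end

section
/- Let X_1,...,X_m be 0/1 random variables (not necessarily independent) satisfying: for every subset J ⊆ [m], Pr[∀j∈J, X_j = 1] ≤ Π_{j∈J} Pr[X_j = 1]. Let X = Σ_i X_i. Then for every t ≥ 0 and every k ≥ 0, E[X^k] ≤ E[X̂^k], where X̂ = Σ_i X̂_i with X̂_i independent 0/1 variables having the same marginals as X_i. -/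
/-!
Expanding `(∑ i, X i)^k` gives a sum over words `p : Fin k → ι` of `∏ j, X (p j)`. For 0/1
variables `X i ^ 2 = X i`, so each such product is the indicator that every `X i` with `i` in the
image of `p` equals `1`. Hence the `k`-th moment is a sum of joint inclusion
probabilities, which negative correlation bounds by the corresponding probabilities for the
independent copies.
-/

open MeasureTheory ProbabilityTheory Finset

section

variable {Ω ι : Type*} (Y : ι → Ω → ℝ)

lemma prod_comp_eq_indicator_setOf_forall_eq_one [DecidableEq ι] {κ : Type*} [Fintype κ]
    (h01 : ∀ i ω, Y i ω = 0 ∨ Y i ω = 1) (p : κ → ι) :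
    (fun ω => ∏ j, Y (p j) ω) = {ω | ∀ i ∈ univ.image p, Y i ω = 1}.indicator 1 := by
  funext ω
  simp only [Set.indicator_apply, Set.mem_ofPred_eq, Pi.one_apply]
  split_ifs with h
  · exact prod_eq_one fun j _ => h (p j) (mem_image_of_mem p (mem_univ j))
  · obtain ⟨i, hi, hne⟩ := not_forall₂.mp h
    obtain ⟨j, -, rfl⟩ := mem_image.mp hi
    exact prod_eq_zero (mem_univ j) ((h01 (p j) ω).resolve_right hne)

variable [MeasurableSpace Ω]

lemma measurableSet_setOf_forall_eq_one (hY : ∀ i, Measurable (Y i)) (s : Finset ι) :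
    MeasurableSet {ω | ∀ i ∈ s, Y i ω = 1} := by
  simp_rw [Set.ofPred_forall]
  exact .biInter s.countable_toSet fun i _ => hY i (measurableSet_singleton 1)

lemma integral_sum_pow_eq_sum_measure [Fintype ι] [DecidableEq ι] (μ : Measure Ω)
    [IsFiniteMeasure μ] (h01 : ∀ i ω, Y i ω = 0 ∨ Y i ω = 1) (hY : ∀ i, Measurable (Y i))
    (k : ℕ) :
    ∫ ω, (∑ i, Y i ω) ^ k ∂μ =
      ∑ p ∈ Fintype.piFinset fun _ : Fin k => univ,
        (μ {ω | ∀ i ∈ univ.image p, Y i ω = 1}).toReal := by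
  have hprod (p : Fin k → ι) := prod_comp_eq_indicator_setOf_forall_eq_one Y h01 p
  have hmeas (p : Fin k → ι) := measurableSet_setOf_forall_eq_one Y hY (univ.image p)
  simp_rw [sum_pow']
  rw [integral_finsetSum _ fun p _ => hprod p ▸ (integrable_const 1).indicator (hmeas p)]
  exact sum_congr rfl fun p _ => hprod p ▸ integral_indicator_one (hmeas p)

lemma integral_sum_pow_le_of_measure_le [Fintype ι] [DecidableEq ι] {Ω' : Type*}
    [MeasurableSpace Ω'] (μ : Measure Ω) (μ' : Measure Ω') [IsFiniteMeasure μ]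
    [IsFiniteMeasure μ'] (Y' : ι → Ω' → ℝ) (h01 : ∀ i ω, Y i ω = 0 ∨ Y i ω = 1)
    (h01' : ∀ i ω, Y' i ω = 0 ∨ Y' i ω = 1) (hY : ∀ i, Measurable (Y i))
    (hY' : ∀ i, Measurable (Y' i))
    (hle : ∀ s : Finset ι,
      (μ {ω | ∀ i ∈ s, Y i ω = 1}).toReal ≤ (μ' {ω | ∀ i ∈ s, Y' i ω = 1}).toReal)
    (k : ℕ) :
    ∫ ω, (∑ i, Y i ω) ^ k ∂μ ≤ ∫ ω, (∑ i, Y' i ω) ^ k ∂μ' := by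
  rw [integral_sum_pow_eq_sum_measure Y μ h01 hY, integral_sum_pow_eq_sum_measure Y' μ' h01' hY']
  exact sum_le_sum fun p _ => hle _

lemma ProbabilityTheory.iIndepFun.measure_setOf_forall_eq_one (μ : Measure Ω)
    (hind : iIndepFun Y μ) (s : Finset ι) :
    (μ {ω | ∀ i ∈ s, Y i ω = 1}).toReal = ∏ i ∈ s, (μ {ω | Y i ω = 1}).toReal := by
  have hinter : {ω | ∀ i ∈ s, Y i ω = 1} = ⋂ i ∈ s, Y i ⁻¹' {1} := by ext; simp
  rw [hinter, hind.measure_inter_preimage_eq_mul s (sets := fun _ => {1})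
    fun _ _ => measurableSet_singleton 1, ENNReal.toReal_prod]
  rfl

end

theorem neg_corr_moment_bound_general
    {Ω Ω' : Type*} [MeasurableSpace Ω] [MeasurableSpace Ω']
    (μ : Measure Ω) (μ' : Measure Ω') [IsProbabilityMeasure μ] [IsProbabilityMeasure μ']
    (m : ℕ) (X : Fin m → Ω → ℝ) (Xhat : Fin m → Ω' → ℝ)
    (hX01 : ∀ i ω, X i ω = 0 ∨ X i ω = 1)
    (hXhat01 : ∀ i ω, Xhat i ω = 0 ∨ Xhat i ω = 1)
    (hXmeas : ∀ i, Measurable (X i)) (hXhatmeas : ∀ i, Measurable (Xhat i))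
    (hneg : ∀ J : Finset (Fin m),
      (μ {ω | ∀ j ∈ J, X j ω = 1}).toReal ≤ ∏ j ∈ J, (μ {ω | X j ω = 1}).toReal)
    (hindep : iIndepFun Xhat μ')
    (hmarg : ∀ i, (μ' {ω | Xhat i ω = 1}).toReal = (μ {ω | X i ω = 1}).toReal)
    (k : ℕ) :
    ∫ ω, (∑ i, X i ω) ^ k ∂μ ≤ ∫ ω, (∑ i, Xhat i ω) ^ k ∂μ' := by
  refine integral_sum_pow_le_of_measure_le X μ μ' Xhat hX01 hXhat01 hXmeas hXhatmeas
    (fun J => ?_) k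
  rw [hindep.measure_setOf_forall_eq_one, prod_congr rfl fun i _ => hmarg i]
  exact hneg J

theorem neg_corr_moment_bound
    {Ω Ω' : Type*} [MeasurableSpace Ω] [MeasurableSpace Ω']
    (μ : Measure Ω) (μ' : Measure Ω') [IsProbabilityMeasure μ] [IsProbabilityMeasure μ']
    (m : ℕ) (X : Fin m → Ω → ℝ) (Xhat : Fin m → Ω' → ℝ)
    (hX01 : ∀ i ω, X i ω = 0 ∨ X i ω = 1)
    (hXhat01 : ∀ i ω, Xhat i ω = 0 ∨ Xhat i ω = 1)
    (hXmeas : ∀ i, Measurable (X i)) (hXhatmeas : ∀ i, Measurable (Xhat i))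
    (hneg : ∀ J : Finset (Fin m),
      (μ {ω | ∀ j ∈ J, X j ω = 1}).toReal ≤ ∏ j ∈ J, (μ {ω | X j ω = 1}).toReal)
    (hindep : iIndepFun Xhat μ')
    (hmarg : ∀ i, (μ' {ω | Xhat i ω = 1}).toReal = (μ {ω | X i ω = 1}).toReal)
    (t : ℝ) (ht : 0 ≤ t) (k : ℕ) :
    ∫ ω, (∑ i, X i ω) ^ k ∂μ ≤ ∫ ω, (∑ i, Xhat i ω) ^ k ∂μ' :=
  neg_corr_moment_bound_general μ μ' m X Xhat hX01 hXhat01 hXmeas hXhatmeas hneg hindep hmarg k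
end

section
/- Let X_1,...,X_m be 0/1 random variables with Pr[X_i=1] = p_i satisfying the upward negative correlation condition Pr[∀j∈J, X_j=1] ≤ Π_{j∈J} p_j for all J. Let X = Σ X_i and μ = Σ p_i. Then for all a with μ ≤ a < m: Pr[X ≥ a] ≤ ((m−μ)/(m−a))^{m−a} · (μ/a)^a. -/
/-!
Markov's inequality for `c ^ X` with `c ≥ 1`. Since each `X i` is `0` or `1`,
`c ^ X = ∏ i, (1 + (c - 1) * X i) = ∑ J, (c - 1) ^ #J * 𝟙{∀ j ∈ J, X j = 1}`, so negative
correlation bounds `𝔼[c ^ X]` by `∏ i, (1 + (c - 1) * p i)`, and AM-GM by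
`(1 + (c - 1) * μ / m) ^ m`. The choice `c = a (m - μ) / (μ (m - a))` gives the bound. When `μ = 0`
every `p i` vanishes, and `X ≥ a > 0` forces some `X i = 1`.
-/

open MeasureTheory ProbabilityTheory Finset

namespace Real

theorem prod_le_arith_mean_pow {ι : Type*} (s : Finset ι) {z : ι → ℝ} (hz : ∀ i ∈ s, 0 ≤ z i) :
    ∏ i ∈ s, z i ≤ ((∑ i ∈ s, z i) / #s) ^ #s := by
  rcases s.eq_empty_or_nonempty with rfl | hs
  · simp
  have hcard : #s ≠ 0 := hs.card_ne_zero
  have amgm := geom_mean_le_arith_mean s (fun _ => 1) z (fun _ _ => zero_le_one)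
    (by simpa using hs) hz
  simp only [rpow_one, sum_const, nsmul_eq_mul, mul_one, one_mul] at amgm
  calc ∏ i ∈ s, z i = ((∏ i ∈ s, z i) ^ (#s : ℝ)⁻¹) ^ #s :=
        (rpow_inv_natCast_pow (prod_nonneg hz) hcard).symm
    _ ≤ ((∑ i ∈ s, z i) / #s) ^ #s := pow_le_pow_left₀ (rpow_nonneg (prod_nonneg hz) _) amgm _

theorem one_add_sub_one_mul_eq_rpow (c : ℝ) {x : ℝ} (hx : x = 0 ∨ x = 1) :
    1 + (c - 1) * x = c ^ x := by
  rcases hx with rfl | rfl <;> simp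

theorem pow_div_rpow_div_eq {B r : ℝ} (hB : 0 < B) (hr : 0 < r) (n : ℕ) (a : ℝ) :
    B ^ n / (B / r) ^ a = B ^ ((n : ℝ) - a) * r ^ a := by
  rw [div_rpow hB.le hr.le, ← rpow_natCast, rpow_sub hB]
  field_simp

theorem le_of_forall_mul_rpow_le_mean_pow {P mu a : ℝ} {n : ℕ} (hmu : 0 < mu) (ha : mu ≤ a)
    (hn : a < n) (hP : ∀ c : ℝ, 1 ≤ c → P * c ^ a ≤ ((n + (c - 1) * mu) / n) ^ n) :
    P ≤ ((n - mu) / (n - a)) ^ ((n : ℝ) - a) * (mu / a) ^ a := by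
  set B := ((n : ℝ) - mu) / (n - a)
  have ha_pos : 0 < a := hmu.trans_le ha
  have hB : 1 ≤ B := by rw [one_le_div₀ (by linarith)]; linarith
  -- the minimiser of `((n + (c - 1) * mu) / n) ^ n / c ^ a` over `c`
  set c := B / (mu / a)
  have hc : 1 ≤ c := by
    rw [one_le_div₀ (by positivity)]
    exact ((div_le_one₀ ha_pos).2 ha).trans hB
  have hmean : ((n : ℝ) + (c - 1) * mu) / n = B := by
    have hn0 : (n : ℝ) ≠ 0 := by linarith
    have hna : (n : ℝ) - a ≠ 0 := by linarith
    simp only [c, B]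
    field_simp
    ring
  calc P ≤ B ^ n / c ^ a := (le_div_iff₀ (by positivity)).2 (hmean ▸ hP c hc)
    _ = B ^ ((n : ℝ) - a) * (mu / a) ^ a :=
        pow_div_rpow_div_eq (by positivity) (by positivity) n a

end Real

section ZeroOne

variable {Ω ι : Type*} {X : ι → Ω → ℝ}

theorem prod_eq_indicator_forall_eq_one (hX01 : ∀ i ω, X i ω = 0 ∨ X i ω = 1)
    (J : Finset ι) (ω : Ω) :
    ∏ j ∈ J, X j ω = {ω | ∀ j ∈ J, X j ω = 1}.indicator 1 ω := by
  by_cases hJ : ∀ j ∈ J, X j ω = 1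
  · rw [prod_eq_one hJ, Set.indicator_of_mem (show ω ∈ {ω | ∀ j ∈ J, X j ω = 1} from hJ)]
    rfl
  · push Not at hJ
    obtain ⟨j, hj, hj1⟩ := hJ
    rw [prod_eq_zero hj ((hX01 j ω).resolve_right hj1), Set.indicator_of_notMem]
    exact fun h => hj1 (h j hj)

theorem measurableSet_forall_eq_one [MeasurableSpace Ω] (hX : ∀ i, Measurable (X i))
    (J : Finset ι) : MeasurableSet {ω | ∀ j ∈ J, X j ω = 1} := by
  simp only [Set.ofPred_forall]
  exact J.measurableSet_biInter fun j _ => hX j (measurableSet_singleton 1)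

variable [Fintype ι]

theorem prod_one_add_mul_eq_sum_indicator (hX01 : ∀ i ω, X i ω = 0 ∨ X i ω = 1) (t : ℝ) :
    (fun ω => ∏ i, (1 + t * X i ω)) =
      fun ω => ∑ J : Finset ι, t ^ #J * {ω | ∀ j ∈ J, X j ω = 1}.indicator 1 ω := by
  ext ω
  simp only [prod_one_add, powerset_univ, prod_mul_distrib, prod_const,
    prod_eq_indicator_forall_eq_one hX01]

variable [MeasurableSpace Ω] {μ : Measure Ω} [IsFiniteMeasure μ]

theorem integrable_prod_one_add_mul (hX01 : ∀ i ω, X i ω = 0 ∨ X i ω = 1)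
    (hX : ∀ i, Measurable (X i)) (t : ℝ) :
    Integrable (fun ω => ∏ i, (1 + t * X i ω)) μ := by
  rw [prod_one_add_mul_eq_sum_indicator hX01]
  exact integrable_finsetSum _ fun J _ =>
    ((integrable_const 1).indicator (measurableSet_forall_eq_one hX J)).const_mul _

theorem integral_prod_one_add_mul (hX01 : ∀ i ω, X i ω = 0 ∨ X i ω = 1)
    (hX : ∀ i, Measurable (X i)) (t : ℝ) :
    ∫ ω, ∏ i, (1 + t * X i ω) ∂μ =
      ∑ J : Finset ι, t ^ #J * μ.real {ω | ∀ j ∈ J, X j ω = 1} := by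
  rw [prod_one_add_mul_eq_sum_indicator hX01, integral_finsetSum]
  · simp only [integral_const_mul, integral_indicator_one (measurableSet_forall_eq_one hX _)]
  · exact fun J _ =>
      ((integrable_const 1).indicator (measurableSet_forall_eq_one hX J)).const_mul _

variable {p : ι → ℝ}

theorem integral_prod_one_add_mul_le (hX01 : ∀ i ω, X i ω = 0 ∨ X i ω = 1)
    (hX : ∀ i, Measurable (X i))
    (hneg : ∀ J : Finset ι, μ.real {ω | ∀ j ∈ J, X j ω = 1} ≤ ∏ j ∈ J, p j)
    {t : ℝ} (ht : 0 ≤ t) :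
    ∫ ω, ∏ i, (1 + t * X i ω) ∂μ ≤ ∏ i, (1 + t * p i) := by
  rw [integral_prod_one_add_mul hX01 hX, prod_one_add, powerset_univ]
  gcongr with J
  rw [prod_mul_distrib, prod_const]
  exact mul_le_mul_of_nonneg_left (hneg J) (pow_nonneg ht _)

theorem measureReal_sum_ge_mul_rpow_le (hX01 : ∀ i ω, X i ω = 0 ∨ X i ω = 1)
    (hX : ∀ i, Measurable (X i))
    (hneg : ∀ J : Finset ι, μ.real {ω | ∀ j ∈ J, X j ω = 1} ≤ ∏ j ∈ J, p j)
    {c : ℝ} (hc : 1 ≤ c) (a : ℝ) :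
    μ.real {ω | a ≤ ∑ i, X i ω} * c ^ a ≤ ∏ i, (1 + (c - 1) * p i) := by
  have hc0 : 0 ≤ c := zero_le_one.trans hc
  have hprod : ∀ ω, ∏ i, (1 + (c - 1) * X i ω) = c ^ ∑ i, X i ω := fun ω => by
    rw [Real.rpow_sum_of_pos (by linarith)]
    exact prod_congr rfl fun i _ => Real.one_add_sub_one_mul_eq_rpow c (hX01 i ω)
  have hmarkov := mul_meas_ge_le_integral_of_nonneg
    (ae_of_all μ fun ω => Real.rpow_nonneg hc0 _)
    (by simpa only [hprod] using integrable_prod_one_add_mul (μ := μ) hX01 hX (c - 1)) (c ^ a)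
  calc μ.real {ω | a ≤ ∑ i, X i ω} * c ^ a
      ≤ c ^ a * μ.real {ω | c ^ a ≤ c ^ ∑ i, X i ω} := by
        rw [mul_comm]
        refine mul_le_mul_of_nonneg_left (measureReal_mono fun ω hω => ?_) (Real.rpow_nonneg hc0 _)
        exact Real.rpow_le_rpow_of_exponent_le hc hω
    _ ≤ ∫ ω, ∏ i, (1 + (c - 1) * X i ω) ∂μ := by simpa only [hprod] using hmarkov
    _ ≤ ∏ i, (1 + (c - 1) * p i) := integral_prod_one_add_mul_le hX01 hX hneg (by linarith)

theorem measureReal_sum_ge_le_sum_of_pos (hX01 : ∀ i ω, X i ω = 0 ∨ X i ω = 1) {a : ℝ}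
    (ha : 0 < a) : μ.real {ω | a ≤ ∑ i, X i ω} ≤ ∑ i, μ.real {ω | X i ω = 1} := by
  refine (measureReal_mono fun ω hω => ?_).trans (measureReal_iUnion_fintype_le _)
  by_contra hnone
  simp only [Set.mem_iUnion, Set.mem_ofPred_eq, not_exists] at hnone hω
  have hzero : ∑ i, X i ω = 0 := sum_eq_zero fun i _ => (hX01 i ω).resolve_right (hnone i)
  linarith

theorem measureReal_sum_ge_mul_rpow_le_mean_pow (hX01 : ∀ i ω, X i ω = 0 ∨ X i ω = 1)
    (hX : ∀ i, Measurable (X i)) (hp : ∀ i, 0 ≤ p i)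
    (hneg : ∀ J : Finset ι, μ.real {ω | ∀ j ∈ J, X j ω = 1} ≤ ∏ j ∈ J, p j)
    {c : ℝ} (hc : 1 ≤ c) (a : ℝ) :
    μ.real {ω | a ≤ ∑ i, X i ω} * c ^ a ≤
      ((Fintype.card ι + (c - 1) * ∑ i, p i) / Fintype.card ι) ^ Fintype.card ι := by
  refine (measureReal_sum_ge_mul_rpow_le hX01 hX hneg hc a).trans ?_
  refine (Real.prod_le_arith_mean_pow univ fun i _ => ?_).trans_eq ?_
  · nlinarith [hp i]
  · simp only [sum_add_distrib, ← mul_sum, sum_const, card_univ, nsmul_eq_mul, mul_one]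

end ZeroOne

theorem neg_corr_chernoff_upper_tail_general
    {Ω : Type*} [MeasurableSpace Ω]
    (μ : Measure Ω) [IsProbabilityMeasure μ]
    (m : ℕ) (X : Fin m → Ω → ℝ)
    (hX01 : ∀ i ω, X i ω = 0 ∨ X i ω = 1)
    (hXmeas : ∀ i, Measurable (X i))
    (p : Fin m → ℝ)
    (hneg : ∀ J : Finset (Fin m),
      (μ {ω | ∀ j ∈ J, X j ω = 1}).toReal ≤ ∏ j ∈ J, p j)
    (mu : ℝ) (hmu : mu = ∑ i, p i)
    (a : ℝ) (ha : mu ≤ a) (ham : a < m) :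
    (μ {ω | a ≤ ∑ i, X i ω}).toReal ≤
      (((m : ℝ) - mu) / ((m : ℝ) - a)) ^ ((m : ℝ) - a) * (mu / a) ^ a := by
  simp only [← measureReal_def] at hneg ⊢
  have hp : ∀ i, 0 ≤ p i := fun i =>
    (measureReal_nonneg.trans (hneg {i})).trans_eq (prod_singleton p i)
  have hmu0 : 0 ≤ mu := hmu ▸ sum_nonneg fun i _ => hp i
  rcases hmu0.eq_or_lt with rfl | hmu_pos
  · rcases ha.eq_or_lt with rfl | ha_pos
    · simp [ham.ne', measureReal_le_one]
    · calc μ.real {ω | a ≤ ∑ i, X i ω} ≤ ∑ i, μ.real {ω | X i ω = 1} :=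
            measureReal_sum_ge_le_sum_of_pos hX01 ha_pos
        _ ≤ ∑ i, p i := sum_le_sum fun i _ => by simpa using hneg {i}
        _ = _ := by rw [← hmu, zero_div, Real.zero_rpow ha_pos.ne', mul_zero]
  refine Real.le_of_forall_mul_rpow_le_mean_pow hmu_pos ha ham fun c hc => ?_
  simpa only [Fintype.card_fin, ← hmu] using
    measureReal_sum_ge_mul_rpow_le_mean_pow hX01 hXmeas hp hneg hc a

theorem neg_corr_chernoff_upper_tail
    {Ω : Type*} [MeasurableSpace Ω]
    (μ : Measure Ω) [IsProbabilityMeasure μ]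
    (m : ℕ) (X : Fin m → Ω → ℝ)
    (hX01 : ∀ i ω, X i ω = 0 ∨ X i ω = 1)
    (hXmeas : ∀ i, Measurable (X i))
    (p : Fin m → ℝ) (hp : ∀ i, (μ {ω | X i ω = 1}).toReal = p i)
    (hneg : ∀ J : Finset (Fin m),
      (μ {ω | ∀ j ∈ J, X j ω = 1}).toReal ≤ ∏ j ∈ J, p j)
    (mu : ℝ) (hmu : mu = ∑ i, p i)
    (a : ℝ) (ha : mu ≤ a) (ham : a < m) :
    (μ {ω | a ≤ ∑ i, X i ω}).toReal ≤
      (((m : ℝ) - mu) / ((m : ℝ) - a)) ^ ((m : ℝ) - a) * (mu / a) ^ a :=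
  neg_corr_chernoff_upper_tail_general μ m X hX01 hXmeas p hneg mu hmu a ha ham
end

section
/- Consider a two-stage sampling process: stage 0 produces random subset S₀ ⊆ [n]; stage 1, given S₀, includes each surviving item i ∈ S₀ independently-in-distribution with consistent conditional probability p¹_i (i.e., Pr[i ∈ S | S₀] = p¹_i whenever i ∈ S₀, independent of which other items are in S₀). If stage 0 satisfies Pr[J ⊆ S₀] ≤ Π_{j∈J} Pr[j ∈ S₀] for all J, and stage 1 conditionally satisfies Pr[J ⊆ S | S₀] ≤ Π_{j∈J} p¹_j for all J ⊆ S₀, then the composed sample satisfies Pr[J ⊆ S] ≤ Π_{j∈J} Pr[j ∈ S], where Pr[j ∈ S] = Pr[j ∈ S₀]·p¹_j. -/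
/-!
Condition on the value `A` of `S₀`. If a stage-1 event `E` can only occur when `S₀` lies in a
family `𝒜`, the law of total probability gives `Pr[E] = ∑_{A ∈ 𝒜} Pr[S₀ = A] · Pr[E | S₀ = A]`.
For `E = {j ∈ S}` consistency makes every conditional factor equal to `p¹_j`, so
`Pr[j ∈ S] = Pr[j ∈ S₀] · p¹_j`; for `E = {J ⊆ S}` stage 1 bounds it by `∏ p¹_j`, so
`Pr[J ⊆ S] ≤ Pr[J ⊆ S₀] · ∏ p¹_j ≤ ∏ Pr[j ∈ S₀] · p¹_j` by stage 0.
-/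

open MeasureTheory ProbabilityTheory Finset

section FiberDecomposition

variable {Ω α : Type*} [MeasurableSpace Ω] {μ : Measure Ω} [IsFiniteMeasure μ] [Fintype α]
  {X : Ω → α} {P : α → Prop} [DecidablePred P] {E : Set Ω}

theorem measure_toReal_setOf_eq_sum_fiber (hX : ∀ a, MeasurableSet {ω | X ω = a}) :
    (μ {ω | P (X ω)}).toReal = ∑ a with P a, (μ {ω | X ω = a}).toReal := by
  have hpre : {ω | P (X ω)} = X ⁻¹' ↑({a | P a} : Finset α) := by ext; simp
  rw [hpre, ← sum_measure_preimage_singleton _ fun a _ ↦ hX a,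
    ENNReal.toReal_sum fun a _ ↦ measure_ne_top μ _]
  rfl

theorem measure_toReal_eq_sum_fiber_mul_cond (hX : ∀ a, MeasurableSet {ω | X ω = a})
    (hE : MeasurableSet E) (hEP : ∀ ω ∈ E, P (X ω)) :
    (μ E).toReal = ∑ a with P a, (μ {ω | X ω = a}).toReal * (μ[E | {ω | X ω = a}]).toReal := by
  have hcover : E = ⋃ a ∈ ({a | P a} : Finset α), {ω | X ω = a} ∩ E := by
    ext ω
    simpa using fun hω ↦ hEP ω hω
  have hdisj : Set.PairwiseDisjoint ↑({a | P a} : Finset α) fun a ↦ {ω | X ω = a} ∩ E :=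
    fun a _ b _ hab ↦ Set.disjoint_left.2 fun ω ha hb ↦ hab (ha.1.symm.trans hb.1)
  conv_lhs => rw [hcover, measure_biUnion_finset hdisj fun a _ ↦ (hX a).inter hE]
  rw [ENNReal.toReal_sum fun a _ ↦ measure_ne_top μ _]
  refine sum_congr rfl fun a _ ↦ ?_
  rw [← cond_mul_eq_inter (hX a), ENNReal.toReal_mul, mul_comm]

theorem measure_toReal_eq_mul_of_cond_eq (hX : ∀ a, MeasurableSet {ω | X ω = a})
    (hE : MeasurableSet E) (hEP : ∀ ω ∈ E, P (X ω)) {c : ℝ}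
    (hc : ∀ a, P a → μ {ω | X ω = a} ≠ 0 → (μ[E | {ω | X ω = a}]).toReal = c) :
    (μ E).toReal = (μ {ω | P (X ω)}).toReal * c := by
  rw [measure_toReal_eq_sum_fiber_mul_cond hX hE hEP, measure_toReal_setOf_eq_sum_fiber hX,
    sum_mul]
  refine sum_congr rfl fun a ha ↦ ?_
  obtain h0 | h0 := eq_or_ne (μ {ω | X ω = a}) 0
  · simp [h0]
  · rw [hc a (mem_filter.1 ha).2 h0]

theorem measure_toReal_le_mul_of_cond_le (hX : ∀ a, MeasurableSet {ω | X ω = a})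
    (hE : MeasurableSet E) (hEP : ∀ ω ∈ E, P (X ω)) {c : ℝ}
    (hc : ∀ a, P a → μ {ω | X ω = a} ≠ 0 → (μ[E | {ω | X ω = a}]).toReal ≤ c) :
    (μ E).toReal ≤ (μ {ω | P (X ω)}).toReal * c := by
  rw [measure_toReal_eq_sum_fiber_mul_cond hX hE hEP, measure_toReal_setOf_eq_sum_fiber hX,
    sum_mul]
  refine sum_le_sum fun a ha ↦ ?_
  obtain h0 | h0 := eq_or_ne (μ {ω | X ω = a}) 0
  · simp [h0]
  · exact mul_le_mul_of_nonneg_left (hc a (mem_filter.1 ha).2 h0) ENNReal.toReal_nonneg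

end FiberDecomposition

theorem two_stage_consistent_inclusion_bound
    {Ω : Type*} [MeasureSpace Ω] [IsProbabilityMeasure (ℙ : Measure Ω)]
    (n : ℕ) (S₀ S : Ω → Finset (Fin n))
    (hmeas₀ : ∀ A : Finset (Fin n), MeasurableSet {ω | S₀ ω = A})
    (hmeas : ∀ i : Fin n, MeasurableSet {ω | i ∈ S ω})
    (hsub : ∀ ω, S ω ⊆ S₀ ω)
    (p1 : Fin n → ℝ)
    -- consistency: conditional survival probability of i at stage 1 is p1 i,
    -- independent of the realization of S₀
    (hconsist : ∀ A : Finset (Fin n), ℙ {ω | S₀ ω = A} ≠ 0 → ∀ i ∈ A,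
      ((ℙ[|{ω | S₀ ω = A}]) {ω | i ∈ S ω}).toReal = p1 i)
    -- stage 1 conditionally satisfies the inclusion bound
    (hstage1 : ∀ A : Finset (Fin n), ℙ {ω | S₀ ω = A} ≠ 0 → ∀ J ⊆ A,
      ((ℙ[|{ω | S₀ ω = A}]) {ω | ∀ j ∈ J, j ∈ S ω}).toReal ≤ ∏ j ∈ J, p1 j)
    -- stage 0 satisfies the inclusion bound
    (hstage0 : ∀ J : Finset (Fin n),
      (ℙ {ω | ∀ j ∈ J, j ∈ S₀ ω}).toReal ≤ ∏ j ∈ J, (ℙ {ω | j ∈ S₀ ω}).toReal) :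
    (∀ j : Fin n, (ℙ {ω | j ∈ S ω}).toReal = (ℙ {ω | j ∈ S₀ ω}).toReal * p1 j) ∧
    (∀ J : Finset (Fin n),
      (ℙ {ω | ∀ j ∈ J, j ∈ S ω}).toReal ≤ ∏ j ∈ J, (ℙ {ω | j ∈ S ω}).toReal) := by
  classical
  have hmarginal : ∀ j, (ℙ {ω | j ∈ S ω}).toReal = (ℙ {ω | j ∈ S₀ ω}).toReal * p1 j :=
    fun j ↦ measure_toReal_eq_mul_of_cond_eq hmeas₀ (hmeas j) (fun ω hω ↦ hsub ω hω)
      fun A hjA h0 ↦ hconsist A h0 j hjA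
  refine ⟨hmarginal, fun J ↦ ?_⟩
  have hJS : MeasurableSet {ω | ∀ j ∈ J, j ∈ S ω} := by
    simpa only [Set.ofPred_forall] using J.measurableSet_biInter fun j _ ↦ hmeas j
  have hcompose : (ℙ {ω | ∀ j ∈ J, j ∈ S ω}).toReal
      ≤ (ℙ {ω | ∀ j ∈ J, j ∈ S₀ ω}).toReal * ∏ j ∈ J, p1 j :=
    measure_toReal_le_mul_of_cond_le (P := fun A ↦ ∀ j ∈ J, j ∈ A) hmeas₀ hJS
      (fun ω hω j hj ↦ hsub ω (hω j hj)) fun A hJA h0 ↦ hstage1 A h0 J hJA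
  have hproduct : ∏ j ∈ J, (ℙ {ω | j ∈ S ω}).toReal
      = (∏ j ∈ J, (ℙ {ω | j ∈ S₀ ω}).toReal) * ∏ j ∈ J, p1 j := by
    rw [← prod_mul_distrib]
    exact prod_congr rfl fun j _ ↦ hmarginal j
  have hnonneg : 0 ≤ ∏ j ∈ J, (ℙ {ω | j ∈ S ω}).toReal := prod_nonneg fun _ _ ↦ by positivity
  -- `p1 j` is unconstrained, possibly negative, when `j ∉ S₀` almost surely
  rcases le_or_gt 0 (∏ j ∈ J, p1 j) with hp | hp
  · rw [hproduct]
    exact hcompose.trans (mul_le_mul_of_nonneg_right (hstage0 J) hp)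
  · exact hcompose.trans ((mul_nonpos_of_nonneg_of_nonpos (by positivity) hp.le).trans hnonneg)
end

section
/- In the two-stage consistent sampling setting: if stage 0 satisfies the exclusion bound Pr[J ∩ S₀ = ∅] ≤ Π_{j∈J} q⁰_j for all J (where q⁰_j = Pr[j ∉ S₀]) and stage 1 conditionally satisfies Pr[J' ∩ S = ∅ | S₀] ≤ Π_{j∈J'} q¹_j for all J' ⊆ S₀ (where q¹_j = 1 − p¹_j is the consistent conditional exclusion probability), then the composed sample satisfies Pr[J ∩ S = ∅] ≤ Π_{j∈J} q[j], where q[j] = q⁰_j + p⁰_j·q¹_j is the overall exclusion probability of item j. -/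
/-!
Condition on the stage-0 sample `S₀ = A`: by the stage-1 bound, `Pr[J ∩ S = ∅]` is at most the
expectation of `∏_{j ∈ J ∩ S₀} q¹_j = ∏_{j ∈ J} (q¹_j + p¹_j · 1[j ∉ S₀])`. Expanding this product
over subsets `K ⊆ J` writes the expectation as a combination of the stage-0 exclusion probabilities
`Pr[K ∩ S₀ = ∅]` with nonnegative coefficients `∏_K p¹ ∏_{J \ K} q¹`. Bounding each of them by
`∏_K q⁰` and refolding gives `∏_J (q¹_j + p¹_j q⁰_j) = ∏_J (q⁰_j + p⁰_j q¹_j)`.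
-/

open MeasureTheory ProbabilityTheory Finset

section ProductExpansion

variable {ι R : Type*} [DecidableEq ι] [CommRing R]

theorem prod_inter_eq_sum_powerset (c : ι → R) (J A : Finset ι) :
    ∏ j ∈ J ∩ A, c j = ∑ K ∈ J.powerset,
      (if ∀ j ∈ K, j ∉ A then 1 else 0) * ((∏ j ∈ K, (1 - c j)) * ∏ j ∈ J \ K, c j) := by
  have hsplit : ∏ j ∈ J ∩ A, c j =
      ∏ j ∈ J, ((1 - c j) * (if j ∉ A then 1 else 0) + c j) := by
    rw [← filter_mem_eq_inter, prod_filter]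
    refine prod_congr rfl fun j _ => ?_
    split_ifs <;> simp_all
  rw [hsplit, prod_add]
  refine sum_congr rfl fun K _ => ?_
  rw [prod_mul_distrib, prod_boole]
  ring

end ProductExpansion

section RandomFinset

variable {Ω ι : Type*} [MeasurableSpace Ω] {μ : Measure Ω} [Fintype ι] {X : Ω → Finset ι}

theorem measurableSet_setOf_of_fiber (hX : ∀ A, MeasurableSet {ω | X ω = A})
    (P : Finset ι → Prop) : MeasurableSet {ω | P (X ω)} := by
  have hunion : {ω | P (X ω)} = ⋃ A ∈ {A | P A}, {ω | X ω = A} := by ext; simp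
  rw [hunion]
  exact .biUnion (Set.to_countable _) fun A _ => hX A

theorem measureReal_eq_sum_inter_fiber [IsFiniteMeasure μ]
    (hX : ∀ A, MeasurableSet {ω | X ω = A}) (T : Set Ω) :
    μ.real T = ∑ A, μ.real (T ∩ {ω | X ω = A}) := by
  have hcover : μ = Measure.sum fun A => μ.restrict {ω | X ω = A} := by
    rw [← Measure.restrict_iUnion _ hX, Set.iUnion_eq_univ_iff.2 fun ω => ⟨X ω, rfl⟩,
      Measure.restrict_univ]
    intro A B hAB
    exact Set.disjoint_left.2 fun ω (hA : X ω = A) (hB : X ω = B) => hAB (hA.symm.trans hB)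
  have hsum : μ T = ∑ A, μ (T ∩ {ω | X ω = A}) := by
    conv_lhs => rw [hcover]
    simp only [Measure.sum_apply_of_countable, tsum_fintype, Measure.restrict_apply' (hX _)]
  rw [measureReal_def, hsum, ENNReal.toReal_sum fun A _ => measure_ne_top _ _]
  rfl

theorem measureReal_setOf_eq_sum_fiber [IsFiniteMeasure μ]
    (hX : ∀ A, MeasurableSet {ω | X ω = A}) (P : Finset ι → Prop) [DecidablePred P] :
    μ.real {ω | P (X ω)} = ∑ A, μ.real {ω | X ω = A} * if P A then 1 else 0 := by
  rw [measureReal_eq_sum_inter_fiber hX]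
  refine sum_congr rfl fun A _ => ?_
  split_ifs with hA
  · rw [mul_one]
    congr 1
    ext ω
    exact and_iff_right_of_imp fun (hω : X ω = A) => show P (X ω) by rw [hω]; exact hA
  · rw [mul_zero]
    convert measureReal_empty (μ := μ)
    ext ω
    exact iff_false_intro fun ⟨hP, (hω : X ω = A)⟩ => hA (hω ▸ hP)

theorem measureReal_mem_eq_one_sub [IsProbabilityMeasure μ]
    (hX : ∀ A, MeasurableSet {ω | X ω = A}) (j : ι) :
    μ.real {ω | j ∈ X ω} = 1 - μ.real {ω | j ∉ X ω} := by
  rw [← probReal_compl_eq_one_sub (measurableSet_setOf_of_fiber hX (j ∉ ·))]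
  simp only [Set.compl_ofPred, not_not]

theorem sum_fiber_mul_prod_inter_le [DecidableEq ι] [IsProbabilityMeasure μ]
    (hX : ∀ A, MeasurableSet {ω | X ω = A}) (J : Finset ι)
    (hexcl : ∀ K ⊆ J, μ.real {ω | ∀ j ∈ K, j ∉ X ω} ≤ ∏ j ∈ K, μ.real {ω | j ∉ X ω})
    (c : ι → ℝ) (hc : ∀ j, 0 ≤ c j ∧ c j ≤ 1) :
    ∑ A, μ.real {ω | X ω = A} * ∏ j ∈ J ∩ A, c j ≤
      ∏ j ∈ J, (μ.real {ω | j ∉ X ω} + μ.real {ω | j ∈ X ω} * c j) := by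
  calc ∑ A, μ.real {ω | X ω = A} * ∏ j ∈ J ∩ A, c j
      = ∑ K ∈ J.powerset, ((∏ j ∈ K, (1 - c j)) * ∏ j ∈ J \ K, c j) *
          μ.real {ω | ∀ j ∈ K, j ∉ X ω} := by
        have hexpand (K : Finset ι) : μ.real {ω | ∀ j ∈ K, j ∉ X ω} =
            ∑ A, μ.real {ω | X ω = A} * if ∀ j ∈ K, j ∉ A then 1 else 0 :=
          measureReal_setOf_eq_sum_fiber hX (fun A => ∀ j ∈ K, j ∉ A)
        simp_rw [prod_inter_eq_sum_powerset, mul_sum, hexpand, mul_sum]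
        rw [sum_comm]
        exact sum_congr rfl fun K _ => sum_congr rfl fun A _ => by ring_nf
    _ ≤ ∑ K ∈ J.powerset, ((∏ j ∈ K, (1 - c j)) * ∏ j ∈ J \ K, c j) *
          ∏ j ∈ K, μ.real {ω | j ∉ X ω} := by
        refine sum_le_sum fun K hK => mul_le_mul_of_nonneg_left (hexcl K (mem_powerset.1 hK)) ?_
        exact mul_nonneg (prod_nonneg fun j _ => sub_nonneg.2 (hc j).2)
          (prod_nonneg fun j _ => (hc j).1)
    _ = ∏ j ∈ J, ((1 - c j) * μ.real {ω | j ∉ X ω} + c j) := by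
        rw [prod_add]
        exact sum_congr rfl fun K _ => by rw [prod_mul_distrib]; ring
    _ = ∏ j ∈ J, (μ.real {ω | j ∉ X ω} + μ.real {ω | j ∈ X ω} * c j) :=
        prod_congr rfl fun j _ => by rw [measureReal_mem_eq_one_sub hX]; ring

theorem measureReal_inter_le_mul_of_cond_le [IsFiniteMeasure μ] {s t : Set Ω}
    (hs : MeasurableSet s) {b : ℝ} (hb : 0 ≤ b) (h : μ s ≠ 0 → (μ[|s]).real t ≤ b) :
    μ.real (t ∩ s) ≤ μ.real s * b := by
  by_cases hμs : μ s = 0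
  · rw [measureReal_def, measure_inter_null_of_null_right t hμs, ENNReal.toReal_zero]
    exact mul_nonneg measureReal_nonneg hb
  · rw [Set.inter_comm, measureReal_def, ← cond_mul_eq_inter hs, ENNReal.toReal_mul, mul_comm]
    exact mul_le_mul_of_nonneg_left (h hμs) measureReal_nonneg

end RandomFinset

theorem two_stage_consistent_exclusion_bound_general
    {Ω : Type*} [MeasureSpace Ω] [IsProbabilityMeasure (ℙ : Measure Ω)]
    (n : ℕ) (S₀ S : Ω → Finset (Fin n))
    (hmeas₀ : ∀ A : Finset (Fin n), MeasurableSet {ω | S₀ ω = A})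
    (p1 : Fin n → ℝ) (hp1 : ∀ i, 0 ≤ p1 i ∧ p1 i ≤ 1)
    -- stage 1 conditionally satisfies the exclusion bound with q1 j = 1 - p1 j
    (hstage1 : ∀ A : Finset (Fin n), ℙ {ω | S₀ ω = A} ≠ 0 → ∀ J ⊆ A,
      ((ℙ[|{ω | S₀ ω = A}]) {ω | ∀ j ∈ J, j ∉ S ω}).toReal ≤ ∏ j ∈ J, (1 - p1 j))
    -- stage 0 satisfies the exclusion bound with q0 j = Pr[j ∉ S₀]
    (hstage0 : ∀ J : Finset (Fin n),
      (ℙ {ω | ∀ j ∈ J, j ∉ S₀ ω}).toReal ≤ ∏ j ∈ J, (ℙ {ω | j ∉ S₀ ω}).toReal) :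
    ∀ J : Finset (Fin n),
      (ℙ {ω | ∀ j ∈ J, j ∉ S ω}).toReal ≤
        ∏ j ∈ J, ((ℙ {ω | j ∉ S₀ ω}).toReal
          + (ℙ {ω | j ∈ S₀ ω}).toReal * (1 - p1 j)) := by
  intro J
  have hq1 : ∀ j, 0 ≤ 1 - p1 j ∧ 1 - p1 j ≤ 1 := fun j =>
    ⟨sub_nonneg.2 (hp1 j).2, sub_le_self _ (hp1 j).1⟩
  have hfiber : ∀ A, (ℙ : Measure Ω).real ({ω | ∀ j ∈ J, j ∉ S ω} ∩ {ω | S₀ ω = A}) ≤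
      (ℙ : Measure Ω).real {ω | S₀ ω = A} * ∏ j ∈ J ∩ A, (1 - p1 j) := by
    intro A
    have hmono : {ω | ∀ j ∈ J, j ∉ S ω} ⊆ {ω | ∀ j ∈ J ∩ A, j ∉ S ω} :=
      fun ω hω j hj => hω j (mem_of_mem_inter_left hj)
    exact measureReal_inter_le_mul_of_cond_le (hmeas₀ A) (prod_nonneg fun j _ => (hq1 j).1)
      fun hA => (measureReal_mono hmono).trans (hstage1 A hA _ inter_subset_right)
  calc (ℙ : Measure Ω).real {ω | ∀ j ∈ J, j ∉ S ω}
      = ∑ A, (ℙ : Measure Ω).real ({ω | ∀ j ∈ J, j ∉ S ω} ∩ {ω | S₀ ω = A}) :=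
        measureReal_eq_sum_inter_fiber hmeas₀ _
    _ ≤ ∑ A, (ℙ : Measure Ω).real {ω | S₀ ω = A} * ∏ j ∈ J ∩ A, (1 - p1 j) :=
        sum_le_sum fun A _ => hfiber A
    _ ≤ _ := sum_fiber_mul_prod_inter_le hmeas₀ J (fun K _ => hstage0 K) _ hq1

theorem two_stage_consistent_exclusion_bound
    {Ω : Type*} [MeasureSpace Ω] [IsProbabilityMeasure (ℙ : Measure Ω)]
    (n : ℕ) (S₀ S : Ω → Finset (Fin n))
    (hmeas₀ : ∀ A : Finset (Fin n), MeasurableSet {ω | S₀ ω = A})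
    (hmeas : ∀ i : Fin n, MeasurableSet {ω | i ∈ S ω})
    (hsub : ∀ ω, S ω ⊆ S₀ ω)
    (p1 : Fin n → ℝ) (hp1 : ∀ i, 0 ≤ p1 i ∧ p1 i ≤ 1)
    -- consistency: conditional survival probability of i at stage 1 is p1 i,
    -- independent of the realization of S₀
    (hconsist : ∀ A : Finset (Fin n), ℙ {ω | S₀ ω = A} ≠ 0 → ∀ i ∈ A,
      ((ℙ[|{ω | S₀ ω = A}]) {ω | i ∈ S ω}).toReal = p1 i)
    -- stage 1 conditionally satisfies the exclusion bound with q1 j = 1 - p1 j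
    (hstage1 : ∀ A : Finset (Fin n), ℙ {ω | S₀ ω = A} ≠ 0 → ∀ J ⊆ A,
      ((ℙ[|{ω | S₀ ω = A}]) {ω | ∀ j ∈ J, j ∉ S ω}).toReal ≤ ∏ j ∈ J, (1 - p1 j))
    -- stage 0 satisfies the exclusion bound with q0 j = Pr[j ∉ S₀]
    (hstage0 : ∀ J : Finset (Fin n),
      (ℙ {ω | ∀ j ∈ J, j ∉ S₀ ω}).toReal ≤ ∏ j ∈ J, (ℙ {ω | j ∉ S₀ ω}).toReal) :
    ∀ J : Finset (Fin n),
      (ℙ {ω | ∀ j ∈ J, j ∉ S ω}).toReal ≤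
        ∏ j ∈ J, ((ℙ {ω | j ∉ S₀ ω}).toReal
          + (ℙ {ω | j ∈ S₀ ω}).toReal * (1 - p1 j)) :=
  two_stage_consistent_exclusion_bound_general n S₀ S hmeas₀ p1 hp1 hstage1 hstage0
end
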